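/- arXiv:1910.08647 — 2 statements merged into one kernel-verified Lean document; each statement's English description precedes it below -/
import Mathlib

section
/- For any security game (D, {A_d}_{d∈D}, π), any action d ∈ D of the defender, any response action a ∈ A_d of the attacker, and any formula φ of the extended language Φ⁺, we have (d,a) ⊨ Dφ if and only if (d,a) ⊨ φ ∧ ¬N(¬φ → A¬φ). -/
/-- Formulae of the extended language Φ⁺: propositional variables, negation,
implication, the necessity modality `N` (`nec`), the attacker's blameworthiness
modality `A` (`blame`), and the defender's blameworthiness modality `D` (`dblame`). -/
inductive Formula : Type
  | var : ℕ → Formula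
  | neg : Formula → Formula
  | imp : Formula → Formula → Formula
  | nec : Formula → Formula
  | blame : Formula → Formula
  | dblame : Formula → Formula

namespace Formula

/-- Conjunction, defined through `→` and `¬` in the standard way. -/
def conj (φ ψ : Formula) : Formula := neg (imp φ (neg ψ))

end Formula

/-- A security game: a set `D` of actions of the defender; for each `d ∈ D` a
nonempty set `A d` of actions of the attacker in response to `d`; and a valuation
assigning to each propositional variable a set of action profiles `(d, a)`. -/
structure SecurityGame where
  D : Type
  A : D → Type
  nonempty : ∀ d, Nonempty (A d)
  val : ℕ → ∀ d : D, A d → Prop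

/-- The satisfaction relation `(d, a) ⊨ φ` of a security game, for the extended
language Φ⁺. -/
def Sat (G : SecurityGame) : Formula → ∀ d : G.D, G.A d → Prop
  | .var p, d, a => G.val p d a
  | .neg φ, d, a => ¬ Sat G φ d a
  | .imp φ ψ, d, a => Sat G φ d a → Sat G ψ d a
  | .nec φ, _, _ => ∀ (d' : G.D) (a' : G.A d'), Sat G φ d' a'
  | .blame φ, d, a => Sat G φ d a ∧ ∃ a' : G.A d, ¬ Sat G φ d a'
  | .dblame φ, d, a => Sat G φ d a ∧ ∃ d' : G.D, ∀ a' : G.A d', ¬ Sat G φ d' a'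

namespace Formula

variable (G : SecurityGame) {d : G.D} {a : G.A d} {φ ψ : Formula}

theorem sat_neg : Sat G φ.neg d a ↔ ¬Sat G φ d a := Iff.rfl

theorem sat_conj : Sat G (φ.conj ψ) d a ↔ Sat G φ d a ∧ Sat G ψ d a := by
  rw [conj, sat_neg, Sat, sat_neg, Classical.not_imp, not_not]

theorem sat_nec_neg_imp_blame_neg :
    Sat G ((φ.neg.imp φ.neg.blame).nec) d a ↔ ∀ d', ∃ a', Sat G φ d' a' := by
  simp only [Sat, not_not]
  refine ⟨fun h d' => ?_, fun h d' _ hnφ => ⟨hnφ, h d'⟩⟩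
  -- `¬φ → A¬φ` at any response `a₀` to `d'` yields a response satisfying `φ`: `a₀` or the one `A¬φ` provides.
  obtain ⟨a₀⟩ := G.nonempty d'
  by_cases hφ : Sat G φ d' a₀
  · exact ⟨a₀, hφ⟩
  · exact (h d' a₀ hφ).2

end Formula

/-- For any security game, any action `d` of the defender, any response action `a`
of the attacker, and any formula `φ` of the extended language Φ⁺:
`(d,a) ⊨ D φ` if and only if `(d,a) ⊨ φ ∧ ¬N(¬φ → A ¬φ)`. -/
theorem dblame_iff (G : SecurityGame) (d : G.D) (a : G.A d) (φ : Formula) :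
    Sat G φ.dblame d a ↔
      Sat G (φ.conj ((((φ.neg).imp ((φ.neg).blame)).nec).neg)) d a := by
  rw [Formula.sat_conj, Formula.sat_neg, Formula.sat_nec_neg_imp_blame_neg]
  push Not
  rfl
end

section
/- For any security game (D, {A_d}_{d∈D}, π), any formula φ of the extended language Φ⁺, any defender's action d ∈ D, and any attacker's response action a ∈ A_d, we have (d,a) ⊨ Dφ → N(φ → Dφ). (That is, the Fairness axiom is sound for the defender's blameworthiness modality D in security games.) -/
/-- Soundness of the Fairness axiom for the defender's blameworthiness modality `D`
in security games: `(d,a) ⊨ D φ → N(φ → D φ)`. -/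
theorem fairness_sound (G : SecurityGame) (φ : Formula) (d : G.D) (a : G.A d) :
    Sat G ((φ.dblame).imp ((φ.imp φ.dblame).nec)) d a := by
  -- the witness `d'` of `D φ` does not depend on the profile `(d, a)`
  rintro ⟨-, d', hd'⟩ _ _ hφ
  exact ⟨hφ, d', hd'⟩
end
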